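/- Let C ⊂ ℝ^9 be the 272-point code C = S ∪ T, where S = {±e_i ± e_j : 1 ≤ i < j ≤ 9} (144 vectors) and T is the set of 128 vectors whose ninth coordinate is 0 and whose first eight coordinates are all ±1/2 with an even number of minus signs. Then C is not locally jammed; in fact, for every x ∈ T there exists a continuous non-constant map γ : [0,1] → ℝ^9 with γ(0) = x such that for all t ∈ [0,1], |γ(t)|² = 2 and ⟨γ(t), y⟩ ≤ 1 for every y ∈ C with y ≠ x. -/

import Mathlib

/-!
Rotate `x` towards the ninth axis along `γ t = cos (t/4) • x + sin (t/4) • √2 e₉`. Since `x ⊥ e₉`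
and `‖x‖² = 2`, the path stays on the sphere. A point `y ≠ x` of the code with `y₉ = 0` already
satisfies `⟪x, y⟫ ≤ 1` (a second tail differs from `x` in an even, nonzero number of signs),
and `cos ≥ 0` keeps it so. The remaining points `±eᵢ ± e₉` have `⟪x, y⟫ ≤ 1/2`, while the
rotation adds at most `sin (1/4) · √2 < 1/2`.
-/

open scoped RealInnerProductSpace

/-- The `Dₙ` root system: all vectors `±eᵢ ± eⱼ` with `i < j`. -/
def DRootSystem (n : ℕ) : Set (EuclideanSpace ℝ (Fin n)) :=
  { v | ∃ i j : Fin n, i < j ∧ ∃ s t : ℝ, (s = 1 ∨ s = -1) ∧ (t = 1 ∨ t = -1) ∧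
      v = s • EuclideanSpace.single i (1 : ℝ) + t • EuclideanSpace.single j (1 : ℝ) }

/-- The 128 vectors in `ℝ⁹` whose ninth coordinate is `0` and whose first eight
coordinates are all `±1/2`, with an even number of minus signs. -/
def Lambda9Tails : Set (EuclideanSpace ℝ (Fin 9)) :=
  { v | v 8 = 0 ∧ (∀ i : Fin 9, i ≠ 8 → (v i = 1 / 2 ∨ v i = -(1 / 2))) ∧
      Even {i : Fin 9 | v i = -(1 / 2)}.ncard }

/-- The kissing configuration of the laminated lattice `Λ₉`. -/
def Lambda9Kiss : Set (EuclideanSpace ℝ (Fin 9)) :=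
  DRootSystem 9 ∪ Lambda9Tails

open Finset symmDiff in
theorem Finset.even_card_symmDiff {α : Type*} [DecidableEq α] {s t : Finset α}
    (hs : Even #s) (ht : Even #t) : Even #(s ∆ t) := by
  have hsub : #((s ∪ t) \ (s ∩ t)) = #(s ∪ t) - #(s ∩ t) :=
    card_sdiff_of_subset inter_subset_union
  have hle : #(s ∩ t) ≤ #(s ∪ t) := card_le_card inter_subset_union
  have hsum := card_union_add_card_inter s t
  rw [symmDiff_eq_sup_sdiff_inf, sup_eq_union, inf_eq_inter, hsub]
  rcases hs with ⟨a, ha⟩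
  rcases ht with ⟨b, hb⟩
  exact ⟨a + b - #(s ∩ t), by omega⟩

section Rotation

variable {E : Type*} [NormedAddCommGroup E] [InnerProductSpace ℝ E]

theorem norm_cos_smul_add_sin_smul {x v : E} (hxv : ⟪x, v⟫ = 0) (hv : ‖v‖ = ‖x‖) (θ : ℝ) :
    ‖Real.cos θ • x + Real.sin θ • v‖ = ‖x‖ := by
  have horth : ⟪Real.cos θ • x, Real.sin θ • v⟫ = 0 := by
    simp [real_inner_smul_left, real_inner_smul_right, hxv]
  have hsq := norm_add_sq_eq_norm_sq_add_norm_sq_real horth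
  rw [norm_smul, norm_smul, hv, Real.norm_eq_abs, Real.norm_eq_abs] at hsq
  have hpyth := Real.cos_sq_add_sin_sq θ
  rw [← sq_abs, ← sq_abs (Real.sin θ)] at hpyth
  refine (mul_self_inj (norm_nonneg _) (norm_nonneg _)).1 ?_
  linear_combination hsq + (‖x‖ * ‖x‖) * hpyth

end Rotation

namespace DRootSystem

variable {n : ℕ} {x y : EuclideanSpace ℝ (Fin n)}

theorem apply_le_one (hy : y ∈ DRootSystem n) (k : Fin n) : y k ≤ 1 := by
  obtain ⟨i, j, hij, s, t, hs, ht, rfl⟩ := hy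
  have hji : j ≠ i := hij.ne'
  simp only [PiLp.add_apply, PiLp.smul_apply, PiLp.single_apply, smul_eq_mul]
  rcases hs with rfl | rfl <;> rcases ht with rfl | rfl <;> split_ifs <;> simp_all

theorem exists_inner_le_abs_add_abs (hy : y ∈ DRootSystem n) :
    ∃ i j, ⟪x, y⟫ ≤ |x i| + |x j| ∧ ∀ k, y k ≠ 0 → k = i ∨ k = j := by
  obtain ⟨i, j, -, s, t, hs, ht, rfl⟩ := hy
  have hsign : ∀ {c : ℝ}, (c = 1 ∨ c = -1) → ∀ a, c * a ≤ |a| := by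
    rintro c (rfl | rfl) a
    exacts [by simpa using le_abs_self a, by simpa using neg_le_abs a]
  refine ⟨i, j, ?_, fun k hk => ?_⟩
  · simp only [inner_add_right, real_inner_smul_right, EuclideanSpace.inner_single_right,
      one_mul, conj_trivial]
    exact add_le_add (hsign hs _) (hsign ht _)
  · by_contra! hkij
    simp [hkij.1, hkij.2] at hk

theorem inner_le_two_mul {r : ℝ} (hy : y ∈ DRootSystem n) (hx : ∀ k, |x k| ≤ r) :
    ⟪x, y⟫ ≤ 2 * r := by
  obtain ⟨i, j, hle, -⟩ := exists_inner_le_abs_add_abs (x := x) hy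
  linarith [hx i, hx j]

theorem inner_le_of_apply_ne_zero {r : ℝ} {m : Fin n} (hy : y ∈ DRootSystem n)
    (hx : ∀ k, |x k| ≤ r) (hxm : x m = 0) (hym : y m ≠ 0) : ⟪x, y⟫ ≤ r := by
  obtain ⟨i, j, hle, hsupp⟩ := exists_inner_le_abs_add_abs (x := x) hy
  rcases hsupp m hym with rfl | rfl
  · linarith [hx j, show |x m| = 0 by simp [hxm]]
  · linarith [hx i, show |x m| = 0 by simp [hxm]]

end DRootSystem

namespace Lambda9Tails

open Finset
open scoped symmDiff

variable {x y : EuclideanSpace ℝ (Fin 9)}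

noncomputable def negCoords (v : EuclideanSpace ℝ (Fin 9)) : Finset (Fin 9) := {i | v i = -(1 / 2)}

theorem even_card_negCoords (hx : x ∈ Lambda9Tails) : Even #(negCoords x) := by
  have h := hx.2.2
  rwa [Set.ncard_eq_toFinset_card', Set.toFinset_ofPred] at h

theorem abs_apply_le (hx : x ∈ Lambda9Tails) (k : Fin 9) : |x k| ≤ 1 / 2 := by
  obtain ⟨hx8, hx, -⟩ := hx
  by_cases hk : k = 8
  · rw [hk, hx8]; norm_num
  · rcases hx k hk with h | h <;> norm_num [h]

theorem mul_apply_eq (hx : x ∈ Lambda9Tails) (hy : y ∈ Lambda9Tails) (k : Fin 9) :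
    x k * y k = (if k = 8 then 0 else 1 / 4) -
      if k ∈ negCoords x ∆ negCoords y then 1 / 2 else 0 := by
  obtain ⟨hx8, hx, -⟩ := hx
  obtain ⟨hy8, hy, -⟩ := hy
  by_cases hk : k = 8
  · subst hk
    norm_num [negCoords, mem_symmDiff, hx8, hy8]
  · rcases hx k hk with h | h <;> rcases hy k hk with h' | h' <;>
      norm_num [negCoords, mem_symmDiff, hk, h, h']

theorem inner_eq (hx : x ∈ Lambda9Tails) (hy : y ∈ Lambda9Tails) :
    ⟪x, y⟫ = 2 - #(negCoords x ∆ negCoords y) / 2 := by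
  simp only [PiLp.inner_apply, RCLike.inner_apply, conj_trivial, mul_comm (y _),
    mul_apply_eq hx hy, sum_sub_distrib, ← sum_filter, sum_const, nsmul_eq_mul]
  rw [filter_mem_eq_inter, univ_inter, sum_ite, sum_const_zero, zero_add, sum_const, filter_ne']
  norm_num
  ring

theorem eq_of_negCoords_eq (hx : x ∈ Lambda9Tails) (hy : y ∈ Lambda9Tails)
    (h : negCoords x = negCoords y) : x = y := by
  obtain ⟨hx8, hx, -⟩ := hx
  obtain ⟨hy8, hy, -⟩ := hy
  ext k
  have hk := congrArg (k ∈ ·) h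
  simp only [negCoords, mem_filter, mem_univ, true_and, eq_iff_iff] at hk
  by_cases h8 : k = 8
  · rw [h8, hx8, hy8]
  · rcases hx k h8 with h | h <;> rcases hy k h8 with h' | h' <;> rw [h, h'] <;>
      norm_num [h, h'] at hk

theorem norm_sq_eq (hx : x ∈ Lambda9Tails) : ‖x‖ ^ 2 = 2 := by
  rw [← real_inner_self_eq_norm_sq, inner_eq hx hx, symmDiff_self]
  simp

theorem inner_le_one (hx : x ∈ Lambda9Tails) (hy : y ∈ Lambda9Tails) (hne : y ≠ x) :
    ⟪x, y⟫ ≤ 1 := by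
  have hpos : #(negCoords x ∆ negCoords y) ≠ 0 := by
    rw [Ne, card_eq_zero, ← bot_eq_empty, symmDiff_eq_bot]
    exact fun h => hne (eq_of_negCoords_eq hx hy h).symm
  obtain ⟨m, hm⟩ := even_card_symmDiff (even_card_negCoords hx) (even_card_negCoords hy)
  have htwo : (2 : ℝ) ≤ #(negCoords x ∆ negCoords y) := by exact_mod_cast (by omega)
  rw [inner_eq hx hy]
  linarith

end Lambda9Tails

namespace Lambda9Kiss

variable {x y : EuclideanSpace ℝ (Fin 9)}

theorem apply_eight_le_one (hy : y ∈ Lambda9Kiss) : y 8 ≤ 1 := by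
  rcases hy with hy | hy
  · exact DRootSystem.apply_le_one hy 8
  · rw [hy.1]
    norm_num

theorem inner_le_one (hx : x ∈ Lambda9Tails) (hy : y ∈ Lambda9Kiss) (hne : y ≠ x) :
    ⟪x, y⟫ ≤ 1 := by
  rcases hy with hy | hy
  · linarith [DRootSystem.inner_le_two_mul hy (Lambda9Tails.abs_apply_le hx)]
  · exact Lambda9Tails.inner_le_one hx hy hne

theorem inner_le_half (hx : x ∈ Lambda9Tails) (hy : y ∈ Lambda9Kiss) (hy8 : y 8 ≠ 0) :
    ⟪x, y⟫ ≤ 1 / 2 :=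
  hy.elim
    (fun hy => DRootSystem.inner_le_of_apply_ne_zero hy (Lambda9Tails.abs_apply_le hx) hx.1 hy8)
    fun hy => absurd hy.1 hy8

end Lambda9Kiss

theorem cos_mul_add_sin_mul_le_one {θ a b : ℝ} (hθ₀ : 0 ≤ θ) (hθ : θ ≤ 1 / 4) (ha : a ≤ 1)
    (hb : b ≤ 2) (hab : 0 < b → a ≤ 1 / 2) : Real.cos θ * a + Real.sin θ * b ≤ 1 := by
  have hcos₀ : 0 ≤ Real.cos θ :=
    Real.cos_nonneg_of_mem_Icc ⟨by linarith [Real.pi_gt_three], by linarith [Real.pi_gt_three]⟩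
  have hcos₁ := Real.cos_le_one θ
  have hsin₀ : 0 ≤ Real.sin θ :=
    Real.sin_nonneg_of_nonneg_of_le_pi hθ₀ (by linarith [Real.pi_gt_three])
  have hsin₁ : Real.sin θ ≤ 1 / 4 := (Real.sin_le hθ₀).trans hθ
  rcases le_or_gt b 0 with hb₀ | hb₀
  · nlinarith [mul_nonpos_of_nonneg_of_nonpos hsin₀ hb₀]
  · have := hab hb₀
    nlinarith

theorem statement7 :
    ∀ x ∈ Lambda9Tails,
      ∃ γ : Set.Icc (0 : ℝ) 1 → EuclideanSpace ℝ (Fin 9),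
        Continuous γ ∧
        γ ⟨0, by norm_num⟩ = x ∧
        (∃ t, γ t ≠ x) ∧
        (∀ t, ‖γ t‖ ^ 2 = 2) ∧
        (∀ t, ∀ y ∈ Lambda9Kiss, y ≠ x → ⟪γ t, y⟫ ≤ 1) := by
  intro x hx
  set v : EuclideanSpace ℝ (Fin 9) := EuclideanSpace.single 8 √2
  have hxv : ⟪x, v⟫ = 0 := by simp [v, EuclideanSpace.inner_single_right, hx.1]
  have hvx : ‖v‖ = ‖x‖ := by
    rw [PiLp.norm_single, Real.norm_of_nonneg (Real.sqrt_nonneg 2),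
      ← Lambda9Tails.norm_sq_eq hx, Real.sqrt_sq (norm_nonneg x)]
  refine ⟨fun t => Real.cos (t / 4) • x + Real.sin (t / 4) • v, by fun_prop, by simp,
    ⟨⟨1, by norm_num⟩, fun h => ?_⟩, fun t => ?_, fun t y hy hne => ?_⟩
  · have h8 := congrArg (· 8) h
    have hsin : 0 < Real.sin (1 / 4) :=
      Real.sin_pos_of_pos_of_lt_pi (by norm_num) (by linarith [Real.pi_gt_three])
    exact hsin.ne' (by simpa [v, hx.1] using h8)
  · rw [norm_cos_smul_add_sin_smul hxv hvx, Lambda9Tails.norm_sq_eq hx]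
  · have hvy : ⟪v, y⟫ = √2 * y 8 := by simp [v, EuclideanSpace.inner_single_left]
    rw [inner_add_left, real_inner_smul_left, real_inner_smul_left, hvy]
    refine cos_mul_add_sin_mul_le_one (by linarith [t.2.1]) (by linarith [t.2.2])
      (Lambda9Kiss.inner_le_one hx hy hne) ?_ fun hpos => Lambda9Kiss.inner_le_half hx hy ?_
    · calc √2 * y 8 ≤ √2 * 1 :=
            mul_le_mul_of_nonneg_left (Lambda9Kiss.apply_eight_le_one hy) (Real.sqrt_nonneg 2)
        _ ≤ 2 := by rw [mul_one, Real.sqrt_le_iff]; norm_num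
    · rintro h
      simp [h] at hpos
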